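/- Let f ∈ C([0,1],ℝ^d) satisfy f(t) ∉ B for all t ∈ [0,1). Then Φ(f) = f and Φ is continuous at f: for every sequence f_n ∈ C([0,1],ℝ^d) with sup_{t∈[0,1]}‖f_n(t)−f(t)‖ → 0 one has sup_{t∈[0,1]}‖Φ(f_n)(t)−f(t)‖ → 0. -/

import Mathlib

open MeasureTheory Filter Topology
open scoped ENNReal NNReal Classical

noncomputable section

variable {d : ℕ}

/-- The hitting-time functional: `τ(f) = min(inf {t ∈ [0,1] : f t ∈ B}, 1)`,
with the convention `inf ∅ = +∞` (realized by adjoining `1` to the set). -/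
def hitTime (B : Set (EuclideanSpace ℝ (Fin d)))
    (f : C(unitInterval, EuclideanSpace ℝ (Fin d))) : ℝ :=
  sInf ({t : ℝ | ∃ ht : t ∈ Set.Icc (0 : ℝ) 1, f ⟨t, ht⟩ ∈ B} ∪ {1})

/-- The stopping map `Φ(f)(t) = f(min(t, τ(f)))`. -/
def stopMap (B : Set (EuclideanSpace ℝ (Fin d)))
    (f : C(unitInterval, EuclideanSpace ℝ (Fin d))) :
    C(unitInterval, EuclideanSpace ℝ (Fin d)) :=
  ⟨fun t => f (Set.projIcc (0 : ℝ) 1 zero_le_one (min t.1 (hitTime B f))),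
    f.continuous.comp (continuous_projIcc.comp
      (continuous_subtype_val.min continuous_const))⟩

/-! `Φ(g) = g ∘ c_{τ(g)}`, where the stopped clock `c_s(t) = min(t, s)` depends continuously
on `s` with `c_1 = id`, and composition is jointly continuous. So it suffices that `τ` is
continuous at `f` with `τ(f) = 1`. Since `B` is closed and `f` avoids it on the compact interval
`[0, s]` for every `s < 1`, a uniform neighbourhood of `f` avoids `B` on `[0, s]` as well. -/

def stoppedClock (s : ℝ) : C(unitInterval, unitInterval) :=
  ⟨fun t => Set.projIcc (0 : ℝ) 1 zero_le_one (min t.1 s),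
    continuous_projIcc.comp (continuous_subtype_val.min continuous_const)⟩

lemma continuous_stoppedClock : Continuous stoppedClock :=
  ContinuousMap.continuous_of_continuous_uncurry _ <|
    (continuous_projIcc (h := zero_le_one)).comp
      ((continuous_subtype_val.comp continuous_snd).min continuous_fst)

lemma stoppedClock_one : stoppedClock 1 = ContinuousMap.id unitInterval := by
  ext t
  simp [stoppedClock, min_eq_left t.2.2, Set.projIcc_of_mem zero_le_one t.2]

lemma stopMap_eq_comp (B : Set (EuclideanSpace ℝ (Fin d)))
    (g : C(unitInterval, EuclideanSpace ℝ (Fin d))) :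
    stopMap B g = g.comp (stoppedClock (hitTime B g)) :=
  rfl

lemma hitTime_le_one (B : Set (EuclideanSpace ℝ (Fin d)))
    (g : C(unitInterval, EuclideanSpace ℝ (Fin d))) : hitTime B g ≤ 1 := by
  refine csInf_le ⟨0, ?_⟩ (Set.mem_union_right _ rfl)
  rintro x (⟨hx, -⟩ | rfl)
  · exact hx.1
  · exact zero_le_one

lemma le_hitTime {B : Set (EuclideanSpace ℝ (Fin d))}
    {g : C(unitInterval, EuclideanSpace ℝ (Fin d))} {s : ℝ} (hs : s ≤ 1)
    (h : ∀ t : unitInterval, (t : ℝ) < s → g t ∉ B) : s ≤ hitTime B g := by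
  refine le_csInf ⟨1, Set.mem_union_right _ rfl⟩ ?_
  rintro x (⟨hx, hxB⟩ | rfl)
  · exact not_lt.1 fun hlt => h ⟨x, hx⟩ hlt hxB
  · exact hs

lemma hitTime_eq_one_of_avoids {B : Set (EuclideanSpace ℝ (Fin d))}
    {f : C(unitInterval, EuclideanSpace ℝ (Fin d))}
    (hf : ∀ t : unitInterval, (t : ℝ) < 1 → f t ∉ B) : hitTime B f = 1 :=
  (hitTime_le_one B f).antisymm (le_hitTime le_rfl hf)

lemma eventually_le_hitTime_of_avoids {B : Set (EuclideanSpace ℝ (Fin d))} (hB : IsClosed B)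
    {f : C(unitInterval, EuclideanSpace ℝ (Fin d))}
    (hf : ∀ t : unitInterval, (t : ℝ) < 1 → f t ∉ B) {s : ℝ} (hs : s < 1) :
    ∀ᶠ g in 𝓝 f, s ≤ hitTime B g := by
  set K : Set unitInterval := {t | (t : ℝ) ≤ s}
  have hK : IsCompact (f '' K) :=
    ((isClosed_le continuous_subtype_val continuous_const).isCompact).image f.continuous
  have hKB : f '' K ⊆ Bᶜ := by
    rintro _ ⟨t, ht, rfl⟩
    exact hf t (lt_of_le_of_lt ht hs)
  obtain ⟨δ, hδ, hδB⟩ := hK.exists_thickening_subset_open hB.isOpen_compl hKB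
  filter_upwards [Metric.ball_mem_nhds f hδ] with g hg
  refine le_hitTime hs.le fun t ht =>
    hδB <| Metric.mem_thickening_iff.2 ⟨f t, ⟨t, ht.le, rfl⟩, ?_⟩
  exact (ContinuousMap.dist_apply_le_dist t).trans_lt hg

lemma tendsto_hitTime_of_avoids {B : Set (EuclideanSpace ℝ (Fin d))} (hB : IsClosed B)
    {f : C(unitInterval, EuclideanSpace ℝ (Fin d))}
    (hf : ∀ t : unitInterval, (t : ℝ) < 1 → f t ∉ B) :
    Tendsto (hitTime B) (𝓝 f) (𝓝 1) := by
  refine tendsto_order.2 ⟨fun a ha => ?_, fun a ha => ?_⟩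
  · obtain ⟨s, has, hs⟩ := exists_between ha
    filter_upwards [eventually_le_hitTime_of_avoids hB hf hs] with g hg
    exact has.trans_le hg
  · exact Eventually.of_forall fun g => (hitTime_le_one B g).trans_lt ha

lemma continuousAt_stopMap_of_avoids {B : Set (EuclideanSpace ℝ (Fin d))} (hB : IsClosed B)
    {f : C(unitInterval, EuclideanSpace ℝ (Fin d))}
    (hf : ∀ t : unitInterval, (t : ℝ) < 1 → f t ∉ B) :
    ContinuousAt (stopMap B) f := by
  have hτ : ContinuousAt (hitTime B) f := by
    rw [ContinuousAt, hitTime_eq_one_of_avoids hf]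
    exact tendsto_hitTime_of_avoids hB hf
  exact ContinuousMap.continuous_comp'.continuousAt.comp
    ((continuous_stoppedClock.continuousAt.comp hτ).prodMk continuousAt_id)

theorem stopMap_continuousAt_of_avoids_general
    (B : Set (EuclideanSpace ℝ (Fin d))) (hB : IsClosed B)
    (f : C(unitInterval, EuclideanSpace ℝ (Fin d)))
    (hf : ∀ t : unitInterval, (t : ℝ) < 1 → f t ∉ B) :
    stopMap B f = f ∧
      ∀ fn : ℕ → C(unitInterval, EuclideanSpace ℝ (Fin d)),
        Filter.Tendsto (fun n => ‖fn n - f‖) Filter.atTop (nhds 0) →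
        Filter.Tendsto (fun n => ‖stopMap B (fn n) - f‖) Filter.atTop (nhds 0) := by
  have hfix : stopMap B f = f := by
    rw [stopMap_eq_comp, hitTime_eq_one_of_avoids hf, stoppedClock_one, ContinuousMap.comp_id]
  refine ⟨hfix, fun fn hfn => ?_⟩
  have hcont := (continuousAt_stopMap_of_avoids hB hf).tendsto
  rw [hfix] at hcont
  exact tendsto_iff_norm_sub_tendsto_zero.1 (hcont.comp (tendsto_iff_norm_sub_tendsto_zero.2 hfn))

/-- If `f` avoids `B` on `[0,1)`, then `Φ(f) = f` and `Φ` is (sequentially) continuous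
at `f`. -/
theorem stopMap_continuousAt_of_avoids
    (B : Set (EuclideanSpace ℝ (Fin d))) (hB : IsClosed B) (hd : 1 ≤ d)
    (f : C(unitInterval, EuclideanSpace ℝ (Fin d)))
    (hf : ∀ t : unitInterval, (t : ℝ) < 1 → f t ∉ B) :
    stopMap B f = f ∧
      ∀ fn : ℕ → C(unitInterval, EuclideanSpace ℝ (Fin d)),
        Filter.Tendsto (fun n => ‖fn n - f‖) Filter.atTop (nhds 0) →
        Filter.Tendsto (fun n => ‖stopMap B (fn n) - f‖) Filter.atTop (nhds 0) :=
  stopMap_continuousAt_of_avoids_general B hB f hf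

end
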